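/- Let p > 1, m > p − 1, N ≥ 1, and define u(x) = ‖x‖^{−p/(m−p+1)} − 1 for x ∈ ℝ^N with 0 < ‖x‖ < 1. Then u is differentiable on the punctured unit ball, its flux is differentiable there, and −Δ_p u(x) = λ̃·(1 + u(x))^m for all 0 < ‖x‖ < 1, where λ̃ = (p/(m+1−p))^{p−1}·(m(N−p) − N(p−1))/(m+1−p); moreover u(x) = 0 whenever ‖x‖ = 1. -/

import Mathlib

open Real Set Metric MeasureTheory

/-- The "flux" of `u` at `x`: `‖∇u(x)‖^(p-2) ∇u(x)` (equal to `0` when `∇u(x) = 0`,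
by the junk-value conventions of `Real.rpow`, since `p ≠ 2` gives `0 ^ (p-2) = 0` and
for `p = 2` the scalar multiplies the zero vector). -/
noncomputable def flux {N : ℕ} (p : ℝ) (u : EuclideanSpace ℝ (Fin N) → ℝ)
    (x : EuclideanSpace ℝ (Fin N)) : EuclideanSpace ℝ (Fin N) :=
  ‖gradient u x‖ ^ (p - 2) • gradient u x

/-- The divergence of a vector field `V` at `x`: `∑ i, ∂V_i/∂x_i (x)`. -/
noncomputable def pdiv {N : ℕ} (V : EuclideanSpace ℝ (Fin N) → EuclideanSpace ℝ (Fin N))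
    (x : EuclideanSpace ℝ (Fin N)) : ℝ :=
  ∑ i : Fin N, fderiv ℝ V x (EuclideanSpace.single i 1) i

/-!
Here `1 + u = ‖x‖ ^ (-A)` with `A = p / (m - p + 1)`, so `∇u = -A ‖x‖ ^ (-A - 2) x` and the flux
is the radial field `-A ^ (p - 1) ‖x‖ ^ β x` with `β = -A (p - 1) - p`. On `ℝ^N` the field
`‖x‖ ^ β x` has divergence `(N + β) ‖x‖ ^ β`. Since `p = A (m - p + 1)`, the exponent is
`β = -A m`, hence `-Δ_p u = A ^ (p - 1) (N - A m) (‖x‖ ^ (-A)) ^ m`, and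
`A ^ (p - 1) (N - A m) = λ̃`.
-/

section NormRpow

variable {E : Type*} [NormedAddCommGroup E] [InnerProductSpace ℝ E]

theorem hasFDerivAt_norm_rpow_of_ne_zero (r : ℝ) {x : E} (hx : x ≠ 0) :
    HasFDerivAt (fun y : E => ‖y‖ ^ r) ((r * ‖x‖ ^ (r - 2)) • innerSL ℝ x) x := by
  have h := (hasStrictFDerivAt_norm_sq x).hasFDerivAt.rpow_const (p := r / 2)
    (Or.inl (by positivity))
  convert h using 1
  · funext y
    rw [← Real.rpow_natCast_mul (norm_nonneg y)]
    ring_nf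
  · rw [← Real.rpow_natCast_mul (norm_nonneg x), ← Nat.cast_smul_eq_nsmul ℝ, smul_smul]
    ring_nf

theorem hasGradientAt_norm_rpow_of_ne_zero [CompleteSpace E] (r : ℝ) {x : E} (hx : x ≠ 0) :
    HasGradientAt (fun y : E => ‖y‖ ^ r) ((r * ‖x‖ ^ (r - 2)) • x) x := by
  rw [hasGradientAt_iff_hasFDerivAt]
  refine (hasFDerivAt_norm_rpow_of_ne_zero r hx).congr_fderiv ?_
  ext y
  simp

end NormRpow

theorem Filter.EventuallyEq.pdiv_eq {N : ℕ}
    {V W : EuclideanSpace ℝ (Fin N) → EuclideanSpace ℝ (Fin N)} {x : EuclideanSpace ℝ (Fin N)}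
    (h : V =ᶠ[nhds x] W) : pdiv V x = pdiv W x := by
  rw [pdiv, pdiv, h.fderiv_eq]

section RadialVectorField

variable {N : ℕ} (c β : ℝ) {x : EuclideanSpace ℝ (Fin N)}

theorem hasFDerivAt_const_mul_norm_rpow_smul (hx : x ≠ 0) :
    HasFDerivAt (fun y : EuclideanSpace ℝ (Fin N) => (c * ‖y‖ ^ β) • y)
      ((c * ‖x‖ ^ β) • ContinuousLinearMap.id ℝ _ +
        ((c * β * ‖x‖ ^ (β - 2)) • innerSL ℝ x).smulRight x) x := by
  refine (((hasFDerivAt_norm_rpow_of_ne_zero β hx).const_mul c).smul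
    (hasFDerivAt_id x)).congr_fderiv ?_
  rw [smul_smul, mul_assoc, id]

theorem pdiv_const_mul_norm_rpow_smul (hx : x ≠ 0) :
    pdiv (fun y : EuclideanSpace ℝ (Fin N) => (c * ‖y‖ ^ β) • y) x
      = c * (N + β) * ‖x‖ ^ β := by
  have hsum : ∑ i, x i * x i = ‖x‖ ^ 2 := by
    rw [← real_inner_self_eq_norm_sq, PiLp.inner_apply]
    simp [sq]
  have hpow : ‖x‖ ^ (β - 2) * ‖x‖ ^ 2 = ‖x‖ ^ β := by
    rw [← Real.rpow_natCast, ← Real.rpow_add (norm_pos_iff.mpr hx)]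
    norm_num
  rw [pdiv, (hasFDerivAt_const_mul_norm_rpow_smul c β hx).fderiv]
  simp [Finset.sum_add_distrib, EuclideanSpace.inner_single_right, mul_assoc, ← Finset.mul_sum,
    hsum]
  linear_combination c * β * hpow

end RadialVectorField

theorem flux_norm_rpow_neg_sub {N : ℕ} (p C : ℝ) {A : ℝ} (hA : 0 < A)
    {y : EuclideanSpace ℝ (Fin N)} (hy : y ≠ 0) :
    flux p (fun z : EuclideanSpace ℝ (Fin N) => ‖z‖ ^ (-A) - C) y
      = (-A ^ (p - 1) * ‖y‖ ^ (-A * (p - 1) - p)) • y := by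
  have hr : 0 < ‖y‖ := norm_pos_iff.mpr hy
  have hgrad : gradient (fun z : EuclideanSpace ℝ (Fin N) => ‖z‖ ^ (-A) - C) y
      = (-A * ‖y‖ ^ (-A - 2)) • y := by
    refine HasGradientAt.gradient ?_
    rw [hasGradientAt_iff_hasFDerivAt]
    exact ((hasGradientAt_norm_rpow_of_ne_zero (-A) hy).hasFDerivAt).sub_const C
  have hnorm : ‖(-A * ‖y‖ ^ (-A - 2)) • y‖ = A * ‖y‖ ^ (-A - 1) := by
    rw [norm_smul, Real.norm_eq_abs, abs_mul, abs_neg, abs_of_pos hA,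
      abs_of_pos (Real.rpow_pos_of_pos hr _), mul_assoc, ← Real.rpow_add_one hr.ne']
    ring_nf
  rw [flux, hgrad, hnorm, smul_smul, Real.mul_rpow hA.le (Real.rpow_nonneg hr.le _),
    ← Real.rpow_mul hr.le]
  congr 1
  calc A ^ (p - 2) * ‖y‖ ^ ((-A - 1) * (p - 2)) * (-A * ‖y‖ ^ (-A - 2))
      = -(A ^ (p - 2) * A) * (‖y‖ ^ ((-A - 1) * (p - 2)) * ‖y‖ ^ (-A - 2)) := by ring
    _ = _ := by
      rw [← Real.rpow_add_one hA.ne', ← Real.rpow_add hr]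
      ring_nf

theorem stmt17_general {N : ℕ} (p m : ℝ) (hp : 1 < p) (hm : p - 1 < m)
    (u : EuclideanSpace ℝ (Fin N) → ℝ)
    (hu : u = fun x => ‖x‖ ^ (-(p / (m - p + 1))) - 1)
    (lam : ℝ)
    (hlam : lam = (p / (m + 1 - p)) ^ (p - 1) *
      ((m * ((N : ℝ) - p) - (N : ℝ) * (p - 1)) / (m + 1 - p))) :
    (∀ x : EuclideanSpace ℝ (Fin N), 0 < ‖x‖ → ‖x‖ < 1 →
      DifferentiableAt ℝ u x ∧
      DifferentiableAt ℝ (flux p u) x ∧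
      -pdiv (flux p u) x = lam * (1 + u x) ^ m) ∧
    ∀ x : EuclideanSpace ℝ (Fin N), ‖x‖ = 1 → u x = 0 := by
  set A := p / (m - p + 1) with hA_def
  have hD : 0 < m - p + 1 := by linarith
  have hA : 0 < A := div_pos (by linarith) hD
  have hexp : -A * (p - 1) - p = -A * m := by
    rw [hA_def]
    field_simp
    ring
  have hlam' : lam = A ^ (p - 1) * (N - A * m) := by
    rw [hlam, show m + 1 - p = m - p + 1 by ring, hA_def]
    field_simp
    ring
  subst hu
  refine ⟨fun x hx0 _ => ?_, fun x hx => by simp [hx]⟩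
  have hx : x ≠ 0 := norm_pos_iff.mp hx0
  have hflux : flux p (fun x => ‖x‖ ^ (-A) - 1) =ᶠ[nhds x]
      fun y => (-A ^ (p - 1) * ‖y‖ ^ (-A * m)) • y :=
    (eventually_ne_nhds hx).mono fun y hy => hexp ▸ flux_norm_rpow_neg_sub p 1 hA hy
  refine ⟨((hasFDerivAt_norm_rpow_of_ne_zero _ hx).sub_const 1).differentiableAt,
    hflux.differentiableAt_iff.mpr
      (hasFDerivAt_const_mul_norm_rpow_smul _ _ hx).differentiableAt, ?_⟩
  rw [hflux.pdiv_eq, pdiv_const_mul_norm_rpow_smul _ _ hx, hlam', add_sub_cancel,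
    ← Real.rpow_mul (norm_nonneg x)]
  ring

/-- for `p > 1`, `m > p - 1`, the function `u(x) = ‖x‖^(-p/(m-p+1)) - 1`
on the punctured unit ball is differentiable with differentiable flux and satisfies
`-Δ_p u = λ̃ (1+u)^m` with
`λ̃ = (p/(m+1-p))^(p-1) (m(N-p) - N(p-1))/(m+1-p)`; moreover `u = 0` on the unit
sphere. -/
theorem stmt17 {N : ℕ} (hN : 1 ≤ N) (p m : ℝ) (hp : 1 < p) (hm : p - 1 < m)
    (u : EuclideanSpace ℝ (Fin N) → ℝ)
    (hu : u = fun x => ‖x‖ ^ (-(p / (m - p + 1))) - 1)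
    (lam : ℝ)
    (hlam : lam = (p / (m + 1 - p)) ^ (p - 1) *
      ((m * ((N : ℝ) - p) - (N : ℝ) * (p - 1)) / (m + 1 - p))) :
    (∀ x : EuclideanSpace ℝ (Fin N), 0 < ‖x‖ → ‖x‖ < 1 →
      DifferentiableAt ℝ u x ∧
      DifferentiableAt ℝ (flux p u) x ∧
      -pdiv (flux p u) x = lam * (1 + u x) ^ m) ∧
    ∀ x : EuclideanSpace ℝ (Fin N), ‖x‖ = 1 → u x = 0 :=
  stmt17_general p m hp hm u hu lam hlam
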